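/- arXiv:1908.10060 — 10 statements merged into one kernel-verified Lean document; each statement's English description precedes it below -/
import Mathlib

section
/- Let f : ℤ⁴ → ℂ and let α₁¹, α₁², α₁³, α₀⁴, α₀⁰ ∈ ℂ. Write a lattice point as l = (l₁,l₂,l₃,l₀) and let e₁, e₂, e₃ denote the unit shifts in the first three directions. Assume that for every l ∈ ℤ⁴ one has f(l+e_k) ≠ f(l−e_k) for k = 1,2,3, and that the two constraints hold: (i) (α₁¹+α₁²+α₁³−α₀⁴+α₀⁰−l₁−l₂−l₃+l₀)/2 = Σ_{k=1}^{3} (α₁ᵏ−l_k)·(f(l)−f(l−e_k))/(f(l+e_k)−f(l−e_k)), and (ii) (α₁¹+α₁²+α₁³−α₀⁴−α₀⁰−l₁−l₂−l₃−l₀)/2 · f(l) = Σ_{k=1}^{3} (α₁ᵏ−l_k)·(f(l)−f(l−e_k))/(f(l+e_k)−f(l−e_k)) · f(l+e_k). Then for every l ∈ ℤ⁴ the similarity equation holds: (α₀⁰+l₀)·f(l) = Σ_{k=1}^{3} (α₁ᵏ−l_k)·(f(l−e_k)−f(l))·(f(l)−f(l+e_k))/(f(l−e_k)−f(l+e_k)).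 -/
/-!
Each quadratic term of the similarity equation is the corresponding term of constraint (i)
multiplied by `f l - f (l + e_k)`, so the similarity equation is `f l * (i) - (ii)`.
-/

theorem mul_sub_mul_sub_div_sub_eq {K : Type*} [Field K] (a xm x xp : K) :
    a * (xm - x) * (x - xp) / (xm - xp) = a * (x - xm) / (xp - xm) * (x - xp) := by
  rw [← neg_sub x xm, ← neg_sub xp xm, div_neg, div_mul_eq_mul_div]
  ring

theorem stmt_2_general (f : ℤ → ℤ → ℤ → ℤ → ℂ) (α11 α12 α13 α04 α00 : ℂ)
    (hc1 : ∀ l1 l2 l3 l0 : ℤ,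
      (α11 + α12 + α13 - α04 + α00 - (l1 : ℂ) - (l2 : ℂ) - (l3 : ℂ) + (l0 : ℂ)) / 2
        = (α11 - (l1 : ℂ)) * (f l1 l2 l3 l0 - f (l1-1) l2 l3 l0)
            / (f (l1+1) l2 l3 l0 - f (l1-1) l2 l3 l0)
          + (α12 - (l2 : ℂ)) * (f l1 l2 l3 l0 - f l1 (l2-1) l3 l0)
            / (f l1 (l2+1) l3 l0 - f l1 (l2-1) l3 l0)
          + (α13 - (l3 : ℂ)) * (f l1 l2 l3 l0 - f l1 l2 (l3-1) l0)
            / (f l1 l2 (l3+1) l0 - f l1 l2 (l3-1) l0))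
    (hc2 : ∀ l1 l2 l3 l0 : ℤ,
      (α11 + α12 + α13 - α04 - α00 - (l1 : ℂ) - (l2 : ℂ) - (l3 : ℂ) - (l0 : ℂ)) / 2
          * f l1 l2 l3 l0
        = (α11 - (l1 : ℂ)) * (f l1 l2 l3 l0 - f (l1-1) l2 l3 l0)
            / (f (l1+1) l2 l3 l0 - f (l1-1) l2 l3 l0) * f (l1+1) l2 l3 l0
          + (α12 - (l2 : ℂ)) * (f l1 l2 l3 l0 - f l1 (l2-1) l3 l0)
            / (f l1 (l2+1) l3 l0 - f l1 (l2-1) l3 l0) * f l1 (l2+1) l3 l0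
          + (α13 - (l3 : ℂ)) * (f l1 l2 l3 l0 - f l1 l2 (l3-1) l0)
            / (f l1 l2 (l3+1) l0 - f l1 l2 (l3-1) l0) * f l1 l2 (l3+1) l0) :
    ∀ l1 l2 l3 l0 : ℤ,
      (α00 + (l0 : ℂ)) * f l1 l2 l3 l0
        = (α11 - (l1 : ℂ)) * (f (l1-1) l2 l3 l0 - f l1 l2 l3 l0)
            * (f l1 l2 l3 l0 - f (l1+1) l2 l3 l0)
            / (f (l1-1) l2 l3 l0 - f (l1+1) l2 l3 l0)
          + (α12 - (l2 : ℂ)) * (f l1 (l2-1) l3 l0 - f l1 l2 l3 l0)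
            * (f l1 l2 l3 l0 - f l1 (l2+1) l3 l0)
            / (f l1 (l2-1) l3 l0 - f l1 (l2+1) l3 l0)
          + (α13 - (l3 : ℂ)) * (f l1 l2 (l3-1) l0 - f l1 l2 l3 l0)
            * (f l1 l2 l3 l0 - f l1 l2 (l3+1) l0)
            / (f l1 l2 (l3-1) l0 - f l1 l2 (l3+1) l0) := by
  intro l1 l2 l3 l0
  simp only [mul_sub_mul_sub_div_sub_eq]
  linear_combination f l1 l2 l3 l0 * hc1 l1 l2 l3 l0 - hc2 l1 l2 l3 l0

/-- Four-dimensional lattice version: the two linear constraints on the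
f-variables `f l₁ l₂ l₃ l₀` derived from the discrete symmetry of the Garnier
system in two variables imply the quadratic similarity constraint. -/
theorem stmt_2 (f : ℤ → ℤ → ℤ → ℤ → ℂ) (α11 α12 α13 α04 α00 : ℂ)
    (hne : ∀ l1 l2 l3 l0 : ℤ,
      f (l1+1) l2 l3 l0 ≠ f (l1-1) l2 l3 l0 ∧
      f l1 (l2+1) l3 l0 ≠ f l1 (l2-1) l3 l0 ∧
      f l1 l2 (l3+1) l0 ≠ f l1 l2 (l3-1) l0)
    (hc1 : ∀ l1 l2 l3 l0 : ℤ,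
      (α11 + α12 + α13 - α04 + α00 - (l1 : ℂ) - (l2 : ℂ) - (l3 : ℂ) + (l0 : ℂ)) / 2
        = (α11 - (l1 : ℂ)) * (f l1 l2 l3 l0 - f (l1-1) l2 l3 l0)
            / (f (l1+1) l2 l3 l0 - f (l1-1) l2 l3 l0)
          + (α12 - (l2 : ℂ)) * (f l1 l2 l3 l0 - f l1 (l2-1) l3 l0)
            / (f l1 (l2+1) l3 l0 - f l1 (l2-1) l3 l0)
          + (α13 - (l3 : ℂ)) * (f l1 l2 l3 l0 - f l1 l2 (l3-1) l0)
            / (f l1 l2 (l3+1) l0 - f l1 l2 (l3-1) l0))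
    (hc2 : ∀ l1 l2 l3 l0 : ℤ,
      (α11 + α12 + α13 - α04 - α00 - (l1 : ℂ) - (l2 : ℂ) - (l3 : ℂ) - (l0 : ℂ)) / 2
          * f l1 l2 l3 l0
        = (α11 - (l1 : ℂ)) * (f l1 l2 l3 l0 - f (l1-1) l2 l3 l0)
            / (f (l1+1) l2 l3 l0 - f (l1-1) l2 l3 l0) * f (l1+1) l2 l3 l0
          + (α12 - (l2 : ℂ)) * (f l1 l2 l3 l0 - f l1 (l2-1) l3 l0)
            / (f l1 (l2+1) l3 l0 - f l1 (l2-1) l3 l0) * f l1 (l2+1) l3 l0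
          + (α13 - (l3 : ℂ)) * (f l1 l2 l3 l0 - f l1 l2 (l3-1) l0)
            / (f l1 l2 (l3+1) l0 - f l1 l2 (l3-1) l0) * f l1 l2 (l3+1) l0) :
    ∀ l1 l2 l3 l0 : ℤ,
      (α00 + (l0 : ℂ)) * f l1 l2 l3 l0
        = (α11 - (l1 : ℂ)) * (f (l1-1) l2 l3 l0 - f l1 l2 l3 l0)
            * (f l1 l2 l3 l0 - f (l1+1) l2 l3 l0)
            / (f (l1-1) l2 l3 l0 - f (l1+1) l2 l3 l0)
          + (α12 - (l2 : ℂ)) * (f l1 (l2-1) l3 l0 - f l1 l2 l3 l0)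
            * (f l1 l2 l3 l0 - f l1 (l2+1) l3 l0)
            / (f l1 (l2-1) l3 l0 - f l1 (l2+1) l3 l0)
          + (α13 - (l3 : ℂ)) * (f l1 l2 (l3-1) l0 - f l1 l2 l3 l0)
            * (f l1 l2 l3 l0 - f l1 l2 (l3+1) l0)
            / (f l1 l2 (l3-1) l0 - f l1 l2 (l3+1) l0) :=
  stmt_2_general f α11 α12 α13 α04 α00 hc1 hc2
end

section
/- Let u : ℤ⁴ → ℂ be nowhere zero and let μ⁽¹⁾, μ⁽²⁾, μ⁽³⁾, μ⁽⁰⁾ : ℤ → ℂ. Suppose u satisfies, for all l = (l₁,l₂,l₃,l₀) ∈ ℤ⁴, the full system: the three Q1_{δ=0} equations in cleared form (u(l)+u(l+e_i))(u(l+e_j)+u(l+e_i+e_j))·μ⁽ʲ⁾(l_j) = (u(l)+u(l+e_j))(u(l+e_i+e_j)+u(l+e_i))·μ⁽ⁱ⁾(l_i) for (i,j) ∈ {(1,2),(2,3),(3,1)}, and the three H1_{ε=0} equations (1/u(l)+1/u(l+e_k))(u(l+e₀)+u(l+e_k+e₀)) = −μ⁽ᵏ⁾(l_k)·μ⁽⁰⁾(l₀)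 for k ∈ {1,2,3}. Define ũ(l₁,l₂,l₃,l₀) = u(−l₁,l₂,l₃,l₀) and parameters μ̃⁽¹⁾(l) = μ⁽¹⁾(−1−l), μ̃⁽²⁾ = μ⁽²⁾, μ̃⁽³⁾ = μ⁽³⁾, μ̃⁽⁰⁾ = μ⁽⁰⁾. Then ũ satisfies the same full system with parameters μ̃⁽¹⁾, μ̃⁽²⁾, μ̃⁽³⁾, μ̃⁽⁰⁾. -/
/-
With m = −1 − l₁, the reflection l₁ ↦ −l₁ maps the first-direction edge from l₁ to l₁ + 1
onto the edge from m + 1 to m, i.e. onto the edge at m traversed backwards. Every equation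
of the system involving the first direction is symmetric under swapping the two endpoints of
that edge, so the reflected field solves the system with μ⁽¹⁾ read at −1 − l₁.
-/

/-- The multi-dimensionally consistent system on ℤ⁴: the three Q1_{δ=0}
equations (in cleared form) on the 2-faces in directions (1,2), (2,3), (3,1),
and the three H1_{ε=0} equations on the 2-faces in directions (k,0),
k = 1,2,3, with edge parameters μ⁽ⁱ⁾(l_i) and μ⁽⁰⁾(l₀). -/
def GarnierLatticeSystem (u : ℤ → ℤ → ℤ → ℤ → ℂ) (μ1 μ2 μ3 μ0 : ℤ → ℂ) : Prop :=
  (∀ l1 l2 l3 l0 : ℤ,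
    (u l1 l2 l3 l0 + u (l1+1) l2 l3 l0)
      * (u l1 (l2+1) l3 l0 + u (l1+1) (l2+1) l3 l0) * μ2 l2
    = (u l1 l2 l3 l0 + u l1 (l2+1) l3 l0)
      * (u (l1+1) (l2+1) l3 l0 + u (l1+1) l2 l3 l0) * μ1 l1)
  ∧ (∀ l1 l2 l3 l0 : ℤ,
    (u l1 l2 l3 l0 + u l1 (l2+1) l3 l0)
      * (u l1 l2 (l3+1) l0 + u l1 (l2+1) (l3+1) l0) * μ3 l3
    = (u l1 l2 l3 l0 + u l1 l2 (l3+1) l0)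
      * (u l1 (l2+1) (l3+1) l0 + u l1 (l2+1) l3 l0) * μ2 l2)
  ∧ (∀ l1 l2 l3 l0 : ℤ,
    (u l1 l2 l3 l0 + u l1 l2 (l3+1) l0)
      * (u (l1+1) l2 l3 l0 + u (l1+1) l2 (l3+1) l0) * μ1 l1
    = (u l1 l2 l3 l0 + u (l1+1) l2 l3 l0)
      * (u (l1+1) l2 (l3+1) l0 + u l1 l2 (l3+1) l0) * μ3 l3)
  ∧ (∀ l1 l2 l3 l0 : ℤ,
    (1 / u l1 l2 l3 l0 + 1 / u (l1+1) l2 l3 l0)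
      * (u l1 l2 l3 (l0+1) + u (l1+1) l2 l3 (l0+1)) = -(μ1 l1 * μ0 l0))
  ∧ (∀ l1 l2 l3 l0 : ℤ,
    (1 / u l1 l2 l3 l0 + 1 / u l1 (l2+1) l3 l0)
      * (u l1 l2 l3 (l0+1) + u l1 (l2+1) l3 (l0+1)) = -(μ2 l2 * μ0 l0))
  ∧ (∀ l1 l2 l3 l0 : ℤ,
    (1 / u l1 l2 l3 l0 + 1 / u l1 l2 (l3+1) l0)
      * (u l1 l2 l3 (l0+1) + u l1 l2 (l3+1) (l0+1)) = -(μ3 l3 * μ0 l0))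

theorem stmt_8_general (u : ℤ → ℤ → ℤ → ℤ → ℂ) (μ1 μ2 μ3 μ0 : ℤ → ℂ)
    (hsys : GarnierLatticeSystem u μ1 μ2 μ3 μ0) :
    GarnierLatticeSystem (fun l1 l2 l3 l0 => u (-l1) l2 l3 l0)
      (fun l => μ1 (-1 - l)) μ2 μ3 μ0 := by
  obtain ⟨h12, h23, h31, h10, h20, h30⟩ := hsys
  refine ⟨?_, ?_, ?_, ?_, ?_, ?_⟩ <;> intro l1 l2 l3 l0 <;>
    simp only [show -(l1 + 1) = -1 - l1 by ring, show -l1 = -1 - l1 + 1 by ring]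
  · linear_combination h12 (-1 - l1) l2 l3 l0
  · exact h23 _ l2 l3 l0
  · linear_combination h31 (-1 - l1) l2 l3 l0
  · linear_combination h10 (-1 - l1) l2 l3 l0
  · exact h20 _ l2 l3 l0
  · exact h30 _ l2 l3 l0

/-- The reflection w₁¹ of the extended affine Weyl group symmetry W̃(A₁⁽¹⁾)
acting in the first lattice direction: l₁ ↦ −l₁, μ⁽¹⁾(l) ↦ μ⁽¹⁾(−1−l)
preserves the full system. -/
theorem stmt_8 (u : ℤ → ℤ → ℤ → ℤ → ℂ) (μ1 μ2 μ3 μ0 : ℤ → ℂ)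
    (hu : ∀ l1 l2 l3 l0 : ℤ, u l1 l2 l3 l0 ≠ 0)
    (hsys : GarnierLatticeSystem u μ1 μ2 μ3 μ0) :
    GarnierLatticeSystem (fun l1 l2 l3 l0 => u (-l1) l2 l3 l0)
      (fun l => μ1 (-1 - l)) μ2 μ3 μ0 :=
  stmt_8_general u μ1 μ2 μ3 μ0 hsys
end

section
/- Let u : ℤ⁴ → ℂ be nowhere zero and let μ⁽¹⁾, μ⁽²⁾, μ⁽³⁾, μ⁽⁰⁾ : ℤ → ℂ. Suppose u satisfies, for all l = (l₁,l₂,l₃,l₀) ∈ ℤ⁴, the full system: the three Q1_{δ=0} equations in cleared form (u(l)+u(l+e_i))(u(l+e_j)+u(l+e_i+e_j))·μ⁽ʲ⁾(l_j) = (u(l)+u(l+e_j))(u(l+e_i+e_j)+u(l+e_i))·μ⁽ⁱ⁾(l_i) for (i,j) ∈ {(1,2),(2,3),(3,1)}, and the three H1_{ε=0} equations (1/u(l)+1/u(l+e_k))(u(l+e₀)+u(l+e_k+e₀)) = −μ⁽ᵏ⁾(l_k)·μ⁽⁰⁾(l₀) for k ∈ {1,2,3}. Define ũ(l₁,l₂,l₃,l₀)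 = −u(1−l₁,l₂,l₃,l₀) and parameters μ̃⁽¹⁾(l) = μ⁽¹⁾(−l), μ̃⁽²⁾ = μ⁽²⁾, μ̃⁽³⁾ = μ⁽³⁾, μ̃⁽⁰⁾ = μ⁽⁰⁾. Then ũ satisfies the same full system with parameters μ̃⁽¹⁾, μ̃⁽²⁾, μ̃⁽³⁾, μ̃⁽⁰⁾. -/
/-!
The reflection `l₁ ↦ 1 - l₁` sends the face based at `l₁` in a direction `(1, j)` onto the face
based at `-l₁` with its two `l₁`-layers exchanged, and Q1 and H1 are symmetric under that
exchange once `μ⁽¹⁾` is read at `-l₁`; faces not involving direction 1 are merely relabelled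
(`l₁ ↦ 1 - l₁`). The sign `u ↦ -u` is harmless since Q1 is homogeneous of degree 2 on both
sides and H1 of degree 0. So each equation of the new system is an equation of the old one
at `-l₁` or at `-l₁ + 1`, up to ring normalization.
-/

theorem stmt_9_general (u : ℤ → ℤ → ℤ → ℤ → ℂ) (μ1 μ2 μ3 μ0 : ℤ → ℂ)
    (hsys : GarnierLatticeSystem u μ1 μ2 μ3 μ0) :
    GarnierLatticeSystem (fun l1 l2 l3 l0 => -u (1 - l1) l2 l3 l0)
      (fun l => μ1 (-l)) μ2 μ3 μ0 := by
  obtain ⟨h12, h23, h31, h10, h20, h30⟩ := hsys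
  refine ⟨?_, ?_, ?_, ?_, ?_, ?_⟩ <;> intro l1 l2 l3 l0 <;>
    simp only [show (1 : ℤ) - l1 = -l1 + 1 by ring, show (1 : ℤ) - (l1 + 1) = -l1 by ring,
      one_div, inv_neg]
  · linear_combination h12 (-l1) l2 l3 l0
  · linear_combination h23 (-l1 + 1) l2 l3 l0
  · linear_combination h31 (-l1) l2 l3 l0
  · linear_combination h10 (-l1) l2 l3 l0
  · linear_combination h20 (-l1 + 1) l2 l3 l0
  · linear_combination h30 (-l1 + 1) l2 l3 l0

/-- The Dynkin-diagram automorphism ϖ₁ of the extended affine Weyl group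
symmetry W̃(A₁⁽¹⁾) acting in the first lattice direction:
u ↦ −u(1−l₁,·), μ⁽¹⁾(l) ↦ μ⁽¹⁾(−l) preserves the full system. -/
theorem stmt_9 (u : ℤ → ℤ → ℤ → ℤ → ℂ) (μ1 μ2 μ3 μ0 : ℤ → ℂ)
    (hu : ∀ l1 l2 l3 l0 : ℤ, u l1 l2 l3 l0 ≠ 0)
    (hsys : GarnierLatticeSystem u μ1 μ2 μ3 μ0) :
    GarnierLatticeSystem (fun l1 l2 l3 l0 => -u (1 - l1) l2 l3 l0)
      (fun l => μ1 (-l)) μ2 μ3 μ0 :=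
  stmt_9_general u μ1 μ2 μ3 μ0 hsys
end

section
/- Let u : ℤ⁴ → ℂ be nowhere zero and let μ⁽¹⁾, μ⁽²⁾, μ⁽³⁾, μ⁽⁰⁾ : ℤ → ℂ. Suppose u satisfies, for all l = (l₁,l₂,l₃,l₀) ∈ ℤ⁴, the full system: the three Q1_{δ=0} equations in cleared form (u(l)+u(l+e_i))(u(l+e_j)+u(l+e_i+e_j))·μ⁽ʲ⁾(l_j) = (u(l)+u(l+e_j))(u(l+e_i+e_j)+u(l+e_i))·μ⁽ⁱ⁾(l_i) for (i,j) ∈ {(1,2),(2,3),(3,1)}, and the three H1_{ε=0} equations (1/u(l)+1/u(l+e_k))(u(l+e₀)+u(l+e_k+e₀)) = −μ⁽ᵏ⁾(l_k)·μ⁽⁰⁾(l₀) for k ∈ {1,2,3}. Define ũ(l₁,l₂,l₃,l₀) = 1/u(l₁,l₂,l₃,−l₀) and parameters μ̃⁽⁰⁾(l) = μ⁽⁰⁾(−1−l), μ̃⁽¹⁾ = μ⁽¹⁾, μ̃⁽²⁾ = μ⁽²⁾, μ̃⁽³⁾ = μ⁽³⁾. Then ũ satisfies the same full system with parameters μ̃⁽¹⁾,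 μ̃⁽²⁾, μ̃⁽³⁾, μ̃⁽⁰⁾. -/
/-! Both halves of the system are invariant under `u ↦ 1/u`: the cleared Q1_{δ=0} relation
is multiplied by `1/(abcd)`, while in H1_{ε=0} inverting `u` swaps the roles of the two
factors, i.e. of the levels `l₀` and `l₀ + 1`. Composing with `l₀ ↦ -l₀` puts the levels
back in order and turns the parameter `μ⁽⁰⁾(l₀)` into `μ⁽⁰⁾(-1-l₀)`. -/

lemma q1_cleared_one_div {K : Type*} [Field K] {a b c d m₁ m₂ : K}
    (ha : a ≠ 0) (hb : b ≠ 0) (hc : c ≠ 0) (hd : d ≠ 0)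
    (h : (a + b) * (c + d) * m₂ = (a + c) * (d + b) * m₁) :
    (1 / a + 1 / b) * (1 / c + 1 / d) * m₂ = (1 / a + 1 / c) * (1 / d + 1 / b) * m₁ := by
  field_simp
  linear_combination h

lemma h1_one_div_swap {K : Type*} [Field K] {a b c d m : K}
    (h : (1 / a + 1 / b) * (c + d) = m) :
    (1 / (1 / c) + 1 / (1 / d)) * (1 / a + 1 / b) = m := by
  rw [one_div_one_div, one_div_one_div, mul_comm, h]

/-- The reflection w₀⁰ of the extended affine Weyl group symmetry W̃(A₁⁽¹⁾)
acting in the distinguished lattice direction 0: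
u ↦ 1/u(·,−l₀), μ⁽⁰⁾(l) ↦ μ⁽⁰⁾(−1−l) preserves the full system. -/
theorem stmt_10 (u : ℤ → ℤ → ℤ → ℤ → ℂ) (μ1 μ2 μ3 μ0 : ℤ → ℂ)
    (hu : ∀ l1 l2 l3 l0 : ℤ, u l1 l2 l3 l0 ≠ 0)
    (hsys : GarnierLatticeSystem u μ1 μ2 μ3 μ0) :
    GarnierLatticeSystem (fun l1 l2 l3 l0 => 1 / u l1 l2 l3 (-l0))
      μ1 μ2 μ3 (fun l => μ0 (-1 - l)) := by
  obtain ⟨h12, h23, h31, h10, h20, h30⟩ := hsys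
  have hlevel : ∀ l0 : ℤ, -1 - l0 + 1 = -l0 := fun l0 => by ring
  have hnext : ∀ l0 : ℤ, -(l0 + 1) = -1 - l0 := fun l0 => by ring
  refine ⟨fun l1 l2 l3 l0 => ?_, fun l1 l2 l3 l0 => ?_, fun l1 l2 l3 l0 => ?_,
    fun l1 l2 l3 l0 => ?_, fun l1 l2 l3 l0 => ?_, fun l1 l2 l3 l0 => ?_⟩
  · exact q1_cleared_one_div (hu _ _ _ _) (hu _ _ _ _) (hu _ _ _ _) (hu _ _ _ _)
      (h12 l1 l2 l3 (-l0))
  · exact q1_cleared_one_div (hu _ _ _ _) (hu _ _ _ _) (hu _ _ _ _) (hu _ _ _ _)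
      (h23 l1 l2 l3 (-l0))
  · exact q1_cleared_one_div (hu _ _ _ _) (hu _ _ _ _) (hu _ _ _ _) (hu _ _ _ _)
      (h31 l1 l2 l3 (-l0))
  · simp only [hnext]; exact h1_one_div_swap (hlevel l0 ▸ h10 l1 l2 l3 (-1 - l0))
  · simp only [hnext]; exact h1_one_div_swap (hlevel l0 ▸ h20 l1 l2 l3 (-1 - l0))
  · simp only [hnext]; exact h1_one_div_swap (hlevel l0 ▸ h30 l1 l2 l3 (-1 - l0))
end

section
/- Let u : ℤ⁴ → ℂ be nowhere zero and let μ⁽¹⁾, μ⁽²⁾, μ⁽³⁾, μ⁽⁰⁾ : ℤ → ℂ. Suppose u satisfies, for all l = (l₁,l₂,l₃,l₀) ∈ ℤ⁴, the full system: the three Q1_{δ=0} equations in cleared form (u(l)+u(l+e_i))(u(l+e_j)+u(l+e_i+e_j))·μ⁽ʲ⁾(l_j) = (u(l)+u(l+e_j))(u(l+e_i+e_j)+u(l+e_i))·μ⁽ⁱ⁾(l_i) for (i,j) ∈ {(1,2),(2,3),(3,1)}, and the three H1_{ε=0} equations (1/u(l)+1/u(l+e_k))(u(l+e₀)+u(l+e_k+e₀))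 = −μ⁽ᵏ⁾(l_k)·μ⁽⁰⁾(l₀) for k ∈ {1,2,3}. Define ũ(l₁,l₂,l₃,l₀) = −1/u(l₁,l₂,l₃,−1−l₀) and parameters μ̃⁽⁰⁾(l) = μ⁽⁰⁾(−2−l), μ̃⁽¹⁾ = μ⁽¹⁾, μ̃⁽²⁾ = μ⁽²⁾, μ̃⁽³⁾ = μ⁽³⁾. Then ũ satisfies the same full system with parameters μ̃⁽¹⁾, μ̃⁽²⁾, μ̃⁽³⁾, μ̃⁽⁰⁾. -/
/-!
Under `v = -1/u` every sum `u(a) + u(b)` becomes `-(u(a) + u(b))/(u(a) u(b))`. In each cleared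
Q1 equation both sides then acquire the same denominator (the product of the four corner values),
so Q1 is invariant. In H1 the map exchanges the roles of `u` and `1/u`, i.e. of the two levels
`l₀` and `l₀ + 1`; reflecting `l₀ ↦ -1 - l₀` swaps them back, and the level `l₀` of the new
system is the level `-2 - l₀` of the old one.
-/

lemma neg_one_div_add_neg_one_div {K : Type*} [Field K] {a b : K} (ha : a ≠ 0) (hb : b ≠ 0) :
    -1 / a + -1 / b = -(a + b) / (a * b) := by
  field_simp
  ring

lemma q1_neg_one_div {K : Type*} [Field K] {a b c d m n : K}
    (ha : a ≠ 0) (hb : b ≠ 0) (hc : c ≠ 0) (hd : d ≠ 0)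
    (h : (a + b) * (c + d) * m = (a + c) * (d + b) * n) :
    (-1 / a + -1 / b) * (-1 / c + -1 / d) * m = (-1 / a + -1 / c) * (-1 / d + -1 / b) * n := by
  rw [neg_one_div_add_neg_one_div ha hb, neg_one_div_add_neg_one_div hc hd,
    neg_one_div_add_neg_one_div ha hc, neg_one_div_add_neg_one_div hd hb]
  calc -(a + b) / (a * b) * (-(c + d) / (c * d)) * m
      = (a + b) * (c + d) * m / (a * b * c * d) := by field_simp
    _ = (a + c) * (d + b) * n / (a * b * c * d) := by rw [h]
    _ = -(a + c) / (a * c) * (-(d + b) / (d * b)) * n := by field_simp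

lemma h1_neg_one_div_reflect {K : Type*} [Field K] {f g m : ℤ → K}
    (hf : ∀ n, f n ≠ 0) (hg : ∀ n, g n ≠ 0)
    (h : ∀ n, (1 / f n + 1 / g n) * (f (n + 1) + g (n + 1)) = -m n) (n : ℤ) :
    (1 / (-1 / f (-1 - n)) + 1 / (-1 / g (-1 - n)))
      * (-1 / f (-1 - (n + 1)) + -1 / g (-1 - (n + 1))) = -m (-2 - n) := by
  have hn : -2 - n + 1 = -1 - n := by ring
  have hn' : -1 - (n + 1) = -2 - n := by ring
  have := h (-2 - n)
  rw [hn] at this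
  rw [hn', ← this, neg_one_div_add_neg_one_div (hf _) (hg _)]
  simp only [one_div_div, div_neg, div_one]
  field_simp [hf (-2 - n), hg (-2 - n)]
  ring

/-- The Dynkin-diagram automorphism ϖ₀ of the extended affine Weyl group
symmetry W̃(A₁⁽¹⁾) acting in the distinguished lattice direction 0:
u ↦ −1/u(·,−1−l₀), μ⁽⁰⁾(l) ↦ μ⁽⁰⁾(−2−l) preserves the full system. -/
theorem stmt_11 (u : ℤ → ℤ → ℤ → ℤ → ℂ) (μ1 μ2 μ3 μ0 : ℤ → ℂ)
    (hu : ∀ l1 l2 l3 l0 : ℤ, u l1 l2 l3 l0 ≠ 0)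
    (hsys : GarnierLatticeSystem u μ1 μ2 μ3 μ0) :
    GarnierLatticeSystem (fun l1 l2 l3 l0 => -1 / u l1 l2 l3 (-1 - l0))
      μ1 μ2 μ3 (fun l => μ0 (-2 - l)) := by
  obtain ⟨h12, h23, h31, h10, h20, h30⟩ := hsys
  refine ⟨fun l1 l2 l3 l0 => ?_, fun l1 l2 l3 l0 => ?_, fun l1 l2 l3 l0 => ?_,
    fun l1 l2 l3 => h1_neg_one_div_reflect (hu _ _ _) (hu _ _ _) (h10 l1 l2 l3),
    fun l1 l2 l3 => h1_neg_one_div_reflect (hu _ _ _) (hu _ _ _) (h20 l1 l2 l3),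
    fun l1 l2 l3 => h1_neg_one_div_reflect (hu _ _ _) (hu _ _ _) (h30 l1 l2 l3)⟩
  all_goals apply q1_neg_one_div (hu _ _ _ _) (hu _ _ _ _) (hu _ _ _ _) (hu _ _ _ _)
  exacts [h12 l1 l2 l3 (-1 - l0), h23 l1 l2 l3 (-1 - l0), h31 l1 l2 l3 (-1 - l0)]
end

section
/- (Commutation r₁r₃₄ = r₃₄r₁.) Let t₁, t₂, θ₁, θ₂, κ₀, κ₁, κ∞, q₁, q₂, p₁, p₂ ∈ ℂ with t₁, t₂ ≠ 0, q₁ ≠ 0. Set α = −(θ₁+θ₂+κ₀+κ₁+κ∞−1)/2 and S = q₁p₁+q₂p₂, and assume S+α ≠ 0 and S+α+κ∞ ≠ 0 and all denominators occurring below are nonzero. Define r₁ by θ₁ ↦ −θ₁, p₁ ↦ p₁ − θ₁/q₁, all other parameters and variables fixed; define r₃₄ by (θ₁,θ₂,κ₀,κ₁,κ∞) ↦ (−θ₁,−θ₂,1−κ₀,1−κ₁,−κ∞), q_i ↦ Q_i := t_i p_i (q_ip_i−θ_i)/((S+α)(S+α+κ∞)), p_i ↦ P_i := −q_ip_i/Q_i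 for i = 1,2. Then the composite transformations r₁∘r₃₄ and r₃₄∘r₁ (each computed with the appropriately transformed parameters and variables) give the same result on the parameters (θ₁,θ₂,κ₀,κ₁,κ∞) and on the variables (q₁,q₂,p₁,p₂). -/
/-!
The transformation r₁ changes θ₁ ↦ -θ₁ and p₁ ↦ p₁ - θ₁/q₁, so q₁p₁ ↦ q₁p₁ - θ₁ while
α ↦ α + θ₁: the quantity S + α, hence the common denominator (S + α)(S + α + κ∞) of r₃₄,
is r₁-invariant. What is left are the identities p₁(q₁p₁ - θ₁) = p₁'(q₁p₁' + θ₁) and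
θ₁ - q₁p₁ = -q₁p₁' for p₁' = p₁ - θ₁/q₁, both consequences of q₁p₁' = q₁p₁ - θ₁.
-/

section R1Shift

variable {K : Type*} [Field K] {q p θ : K}

theorem mul_sub_div_of_ne_zero (hq : q ≠ 0) : q * (p - θ / q) = q * p - θ := by
  rw [mul_sub, mul_div_cancel₀ _ hq]

theorem sum_add_alpha_r1_invariant [NeZero (2 : K)] (q₂ p₂ θ₂ κ₀ κ₁ κinf : K) (hq : q ≠ 0) :
    q * (p - θ / q) + q₂ * p₂ + -(-θ + θ₂ + κ₀ + κ₁ + κinf - 1) / 2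
      = q * p + q₂ * p₂ + -(θ + θ₂ + κ₀ + κ₁ + κinf - 1) / 2 := by
  rw [mul_sub_div_of_ne_zero hq]
  field_simp
  ring

theorem r34_numerator_r1_invariant (t : K) (hq : q ≠ 0) :
    t * (p - θ / q) * (q * (p - θ / q) - -θ) = t * p * (q * p - θ) := by
  linear_combination (t * (p - θ / q) + t * p) * mul_sub_div_of_ne_zero (p := p) (θ := θ) hq

theorem r1_momentum_eq_neg_mul_div (Q : K) (hq : q ≠ 0) :
    -(q * p) / Q - -θ / Q = -(q * (p - θ / q)) / Q := by
  rw [mul_sub_div_of_ne_zero hq]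
  ring

end R1Shift

theorem stmt_13_general (t1 t2 θ1 θ2 κ0 κ1 κi q1 q2 p1 p2 : ℂ)
    (hq1 : q1 ≠ 0)
    (α S : ℂ)
    (hα : α = -(θ1 + θ2 + κ0 + κ1 + κi - 1) / 2)
    (hS : S = q1 * p1 + q2 * p2)
    -- Path A: apply r₃₄ first ...
    (QA1 QA2 PA1 PA2 : ℂ)
    (hQA1 : QA1 = t1 * p1 * (q1 * p1 - θ1) / ((S + α) * (S + α + κi)))
    (hQA2 : QA2 = t2 * p2 * (q2 * p2 - θ2) / ((S + α) * (S + α + κi)))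
    (hPA1 : PA1 = -(q1 * p1) / QA1) (hPA2 : PA2 = -(q2 * p2) / QA2)
    -- ... then r₁ (with the transformed θ₁-parameter −θ₁ and variables QA₁, PA₁)
    (pA1 : ℂ) (hpA1 : pA1 = PA1 - (-θ1) / QA1)
    -- Path B: apply r₁ first ...
    (p1r : ℂ) (hp1r : p1r = p1 - θ1 / q1)
    -- ... then r₃₄ (with the transformed parameters (−θ₁,θ₂,κ₀,κ₁,κ∞))
    (αB SB : ℂ)
    (hαB : αB = -((-θ1) + θ2 + κ0 + κ1 + κi - 1) / 2)
    (hSB : SB = q1 * p1r + q2 * p2)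
    (QB1 QB2 PB1 PB2 : ℂ)
    (hQB1 : QB1 = t1 * p1r * (q1 * p1r - (-θ1)) / ((SB + αB) * (SB + αB + κi)))
    (hQB2 : QB2 = t2 * p2 * (q2 * p2 - θ2) / ((SB + αB) * (SB + αB + κi)))
    (hPB1 : PB1 = -(q1 * p1r) / QB1) (hPB2 : PB2 = -(q2 * p2) / QB2) :
    -- the two composites give the same parameters
    (((-(-θ1)), (-θ2), (1 - κ0), (1 - κ1), (-κi))
        = (((-(-θ1)) : ℂ), ((-θ2) : ℂ), ((1 - κ0) : ℂ), ((1 - κ1) : ℂ),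
            ((-κi) : ℂ)))
    -- and the same variables (q₁,q₂,p₁,p₂)
    ∧ QA1 = QB1 ∧ QA2 = QB2 ∧ pA1 = PB1 ∧ PA2 = PB2 := by
  subst hp1r
  have hSAB : SB + αB = S + α := by
    rw [hSB, hαB, hS, hα, sum_add_alpha_r1_invariant q2 p2 θ2 κ0 κ1 κi hq1]
  have hQ1 : QA1 = QB1 := by rw [hQB1, hSAB, r34_numerator_r1_invariant t1 hq1, hQA1]
  have hQ2 : QA2 = QB2 := by rw [hQA2, hQB2, hSAB]
  refine ⟨rfl, hQ1, hQ2, ?_, ?_⟩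
  · rw [hpA1, hPA1, hPB1, ← hQ1, r1_momentum_eq_neg_mul_div QA1 hq1]
  · rw [hPA2, hPB2, hQ2]

/-- Commutation r₁r₃₄ = r₃₄r₁ for the birational canonical transformations of
the Garnier system in two variables: the composite computed by applying r₃₄
first and then r₁ (path A) agrees with the composite computed by applying r₁
first and then r₃₄ (path B), both on the parameters (θ₁,θ₂,κ₀,κ₁,κ∞) and on
the canonical variables (q₁,q₂,p₁,p₂). Here `κi` denotes κ∞. -/
theorem stmt_13 (t1 t2 θ1 θ2 κ0 κ1 κi q1 q2 p1 p2 : ℂ)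
    (ht1 : t1 ≠ 0) (ht2 : t2 ≠ 0) (hq1 : q1 ≠ 0)
    (α S : ℂ)
    (hα : α = -(θ1 + θ2 + κ0 + κ1 + κi - 1) / 2)
    (hS : S = q1 * p1 + q2 * p2)
    (hSα : S + α ≠ 0) (hSκ : S + α + κi ≠ 0)
    -- Path A: apply r₃₄ first ...
    (QA1 QA2 PA1 PA2 : ℂ)
    (hQA1 : QA1 = t1 * p1 * (q1 * p1 - θ1) / ((S + α) * (S + α + κi)))
    (hQA2 : QA2 = t2 * p2 * (q2 * p2 - θ2) / ((S + α) * (S + α + κi)))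
    (hPA1 : PA1 = -(q1 * p1) / QA1) (hPA2 : PA2 = -(q2 * p2) / QA2)
    -- ... then r₁ (with the transformed θ₁-parameter −θ₁ and variables QA₁, PA₁)
    (pA1 : ℂ) (hpA1 : pA1 = PA1 - (-θ1) / QA1)
    -- Path B: apply r₁ first ...
    (p1r : ℂ) (hp1r : p1r = p1 - θ1 / q1)
    -- ... then r₃₄ (with the transformed parameters (−θ₁,θ₂,κ₀,κ₁,κ∞))
    (αB SB : ℂ)
    (hαB : αB = -((-θ1) + θ2 + κ0 + κ1 + κi - 1) / 2)
    (hSB : SB = q1 * p1r + q2 * p2)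
    (QB1 QB2 PB1 PB2 : ℂ)
    (hQB1 : QB1 = t1 * p1r * (q1 * p1r - (-θ1)) / ((SB + αB) * (SB + αB + κi)))
    (hQB2 : QB2 = t2 * p2 * (q2 * p2 - θ2) / ((SB + αB) * (SB + αB + κi)))
    (hPB1 : PB1 = -(q1 * p1r) / QB1) (hPB2 : PB2 = -(q2 * p2) / QB2)
    -- all denominators occurring above are nonzero
    (hQA1ne : QA1 ≠ 0) (hQA2ne : QA2 ≠ 0) (hQB1ne : QB1 ≠ 0) (hQB2ne : QB2 ≠ 0)
    (hSBα : SB + αB ≠ 0) (hSBκ : SB + αB + κi ≠ 0) :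
    -- the two composites give the same parameters
    (((-(-θ1)), (-θ2), (1 - κ0), (1 - κ1), (-κi))
        = (((-(-θ1)) : ℂ), ((-θ2) : ℂ), ((1 - κ0) : ℂ), ((1 - κ1) : ℂ),
            ((-κi) : ℂ)))
    -- and the same variables (q₁,q₂,p₁,p₂)
    ∧ QA1 = QB1 ∧ QA2 = QB2 ∧ pA1 = PB1 ∧ PA2 = PB2 :=
  stmt_13_general t1 t2 θ1 θ2 κ0 κ1 κi q1 q2 p1 p2 hq1 α S hα hS QA1 QA2 PA1 PA2 hQA1 hQA2 hPA1 hPA2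
    pA1 hpA1 p1r hp1r αB SB hαB hSB QB1 QB2 PB1 PB2 hQB1 hQB2 hPB1 hPB2
end

section
/- (Commutation r₅r₃₄ = r₃₄r₅.) Let t₁, t₂, θ₁, θ₂, κ₀, κ₁, κ∞, q₁, q₂, p₁, p₂ ∈ ℂ with t₁, t₂ ≠ 0. Set α = −(θ₁+θ₂+κ₀+κ₁+κ∞−1)/2 and S = q₁p₁+q₂p₂, and assume S+α ≠ 0, S+α+κ∞ ≠ 0, p₁ ≠ 0, p₂ ≠ 0, q₁p₁ ≠ θ₁, q₂p₂ ≠ θ₂. Define r₅ by κ∞ ↦ −κ∞, with all other parameters and all variables fixed; define r₃₄ by (θ₁,θ₂,κ₀,κ₁,κ∞) ↦ (−θ₁,−θ₂,1−κ₀,1−κ₁,−κ∞), q_i ↦ Q_i := t_i p_i (q_ip_i−θ_i)/((S+α)(S+α+κ∞)), p_i ↦ P_i := −q_ip_i/Q_i for i = 1,2. Then the composite transformations r₅∘r₃₄ and r₃₄∘r₅ (each computed with the appropriately transformed parameters and variables) give the same result on the parameters (θ₁,θ₂,κ₀,κ₁,κ∞) and on the variables (q₁,q₂,p₁,p₂).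 -/
/-- The factors `S + α` and `S + α + κ` of the denominator of r₃₄ are swapped by r₅,
which sends `κ ↦ -κ` and hence `α ↦ α + κ`. -/
theorem add_mul_add_add_neg_eq {R : Type*} [CommRing R] (S α κ : R) :
    (S + (α + κ)) * (S + (α + κ) + -κ) = (S + α) * (S + α + κ) := by
  ring

theorem stmt_14_general (t1 t2 θ1 θ2 κ0 κ1 κi q1 q2 p1 p2 : ℂ)
    (α S : ℂ)
    (hα : α = -(θ1 + θ2 + κ0 + κ1 + κi - 1) / 2)
    -- Path A: apply r₃₄ first, then r₅ (which fixes the variables and negates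
    -- the current κ∞-parameter −κ∞, giving back κ∞)
    (QA1 QA2 PA1 PA2 : ℂ)
    (hQA1 : QA1 = t1 * p1 * (q1 * p1 - θ1) / ((S + α) * (S + α + κi)))
    (hQA2 : QA2 = t2 * p2 * (q2 * p2 - θ2) / ((S + α) * (S + α + κi)))
    (hPA1 : PA1 = -(q1 * p1) / QA1) (hPA2 : PA2 = -(q2 * p2) / QA2)
    -- Path B: apply r₅ first (κ∞ ↦ −κ∞, variables fixed), then r₃₄ with the
    -- transformed parameters (θ₁,θ₂,κ₀,κ₁,−κ∞)
    (αB : ℂ)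
    (hαB : αB = -(θ1 + θ2 + κ0 + κ1 + (-κi) - 1) / 2)
    (QB1 QB2 PB1 PB2 : ℂ)
    (hQB1 : QB1 = t1 * p1 * (q1 * p1 - θ1) / ((S + αB) * (S + αB + (-κi))))
    (hQB2 : QB2 = t2 * p2 * (q2 * p2 - θ2) / ((S + αB) * (S + αB + (-κi))))
    (hPB1 : PB1 = -(q1 * p1) / QB1) (hPB2 : PB2 = -(q2 * p2) / QB2) :
    -- the two composites give the same parameters
    (((-θ1), (-θ2), (1 - κ0), (1 - κ1), (-(-κi)))
        = (((-θ1) : ℂ), ((-θ2) : ℂ), ((1 - κ0) : ℂ), ((1 - κ1) : ℂ),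
            ((-(-κi)) : ℂ)))
    -- and the same variables (q₁,q₂,p₁,p₂)
    ∧ QA1 = QB1 ∧ QA2 = QB2 ∧ PA1 = PB1 ∧ PA2 = PB2 := by
  have hαB_eq : αB = α + κi := by rw [hα, hαB]; ring
  have hden : (S + αB) * (S + αB + -κi) = (S + α) * (S + α + κi) := by
    rw [hαB_eq, add_mul_add_add_neg_eq]
  have hQ1 : QA1 = QB1 := by rw [hQA1, hQB1, hden]
  have hQ2 : QA2 = QB2 := by rw [hQA2, hQB2, hden]
  exact ⟨rfl, hQ1, hQ2, by rw [hPA1, hPB1, hQ1], by rw [hPA2, hPB2, hQ2]⟩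

/-- Commutation r₅r₃₄ = r₃₄r₅ for the birational canonical transformations of
the Garnier system in two variables: the composite computed by applying r₃₄
first and then r₅ (path A) agrees with the composite computed by applying r₅
first and then r₃₄ (path B), both on the parameters (θ₁,θ₂,κ₀,κ₁,κ∞) and on
the canonical variables (q₁,q₂,p₁,p₂). Here `κi` denotes κ∞; note that
α = −(θ₁+θ₂+κ₀+κ₁+κ∞−1)/2 depends on κ∞. -/
theorem stmt_14 (t1 t2 θ1 θ2 κ0 κ1 κi q1 q2 p1 p2 : ℂ)
    (ht1 : t1 ≠ 0) (ht2 : t2 ≠ 0)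
    (α S : ℂ)
    (hα : α = -(θ1 + θ2 + κ0 + κ1 + κi - 1) / 2)
    (hS : S = q1 * p1 + q2 * p2)
    (hSα : S + α ≠ 0) (hSκ : S + α + κi ≠ 0)
    (hp1 : p1 ≠ 0) (hp2 : p2 ≠ 0)
    (hq1p1 : q1 * p1 ≠ θ1) (hq2p2 : q2 * p2 ≠ θ2)
    -- Path A: apply r₃₄ first, then r₅ (which fixes the variables and negates
    -- the current κ∞-parameter −κ∞, giving back κ∞)
    (QA1 QA2 PA1 PA2 : ℂ)
    (hQA1 : QA1 = t1 * p1 * (q1 * p1 - θ1) / ((S + α) * (S + α + κi)))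
    (hQA2 : QA2 = t2 * p2 * (q2 * p2 - θ2) / ((S + α) * (S + α + κi)))
    (hPA1 : PA1 = -(q1 * p1) / QA1) (hPA2 : PA2 = -(q2 * p2) / QA2)
    -- Path B: apply r₅ first (κ∞ ↦ −κ∞, variables fixed), then r₃₄ with the
    -- transformed parameters (θ₁,θ₂,κ₀,κ₁,−κ∞)
    (αB : ℂ)
    (hαB : αB = -(θ1 + θ2 + κ0 + κ1 + (-κi) - 1) / 2)
    (QB1 QB2 PB1 PB2 : ℂ)
    (hQB1 : QB1 = t1 * p1 * (q1 * p1 - θ1) / ((S + αB) * (S + αB + (-κi))))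
    (hQB2 : QB2 = t2 * p2 * (q2 * p2 - θ2) / ((S + αB) * (S + αB + (-κi))))
    (hPB1 : PB1 = -(q1 * p1) / QB1) (hPB2 : PB2 = -(q2 * p2) / QB2) :
    -- the two composites give the same parameters
    (((-θ1), (-θ2), (1 - κ0), (1 - κ1), (-(-κi)))
        = (((-θ1) : ℂ), ((-θ2) : ℂ), ((1 - κ0) : ℂ), ((1 - κ1) : ℂ),
            ((-(-κi)) : ℂ)))
    -- and the same variables (q₁,q₂,p₁,p₂)
    ∧ QA1 = QB1 ∧ QA2 = QB2 ∧ PA1 = PB1 ∧ PA2 = PB2 :=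
  stmt_14_general t1 t2 θ1 θ2 κ0 κ1 κi q1 q2 p1 p2 α S hα QA1 QA2 PA1 PA2 hQA1 hQA2 hPA1 hPA2 αB hαB
    QB1 QB2 PB1 PB2 hQB1 hQB2 hPB1 hPB2
end

section
/- (Commutation r₃₄σ₃₄ = σ₃₄r₃₄.) Let t₁, t₂, θ₁, θ₂, κ₀, κ₁, κ∞, q₁, q₂, p₁, p₂ ∈ ℂ with t₁, t₂ ≠ 0. Set α = −(θ₁+θ₂+κ₀+κ₁+κ∞−1)/2 and S = q₁p₁+q₂p₂, and assume S+α ≠ 0, S+α+κ∞ ≠ 0, p₁ ≠ 0, p₂ ≠ 0, q₁p₁ ≠ θ₁, q₂p₂ ≠ θ₂. Define σ₃₄ by κ₀ ↔ κ₁, t_i ↦ 1/t_i, q_i ↦ q_i/t_i, p_i ↦ t_ip_i (i = 1,2), other parameters fixed; define r₃₄ by (θ₁,θ₂,κ₀,κ₁,κ∞) ↦ (−θ₁,−θ₂,1−κ₀,1−κ₁,−κ∞), q_i ↦ Q_i := t_i p_i (q_ip_i−θ_i)/((S+α)(S+α+κ∞)), p_i ↦ P_i := −q_ip_i/Q_i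 for i = 1,2, with t₁, t₂ fixed. Then the composite transformations r₃₄∘σ₃₄ and σ₃₄∘r₃₄ (each computed with the appropriately transformed t's, parameters and variables) give the same result on (t₁,t₂), on the parameters (θ₁,θ₂,κ₀,κ₁,κ∞), and on the variables (q₁,q₂,p₁,p₂). -/
/-- Commutation r₃₄σ₃₄ = σ₃₄r₃₄ for the birational canonical transformations of
the Garnier system in two variables: the composite computed by applying σ₃₄
first and then r₃₄ (path A) agrees with the composite computed by applying r₃₄
first and then σ₃₄ (path B), on the independent variables (t₁,t₂), on the
parameters (θ₁,θ₂,κ₀,κ₁,κ∞) and on the canonical variables (q₁,q₂,p₁,p₂).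
Here `κi` denotes κ∞; σ₃₄ swaps κ₀ ↔ κ₁ and acts by t_i ↦ 1/t_i,
q_i ↦ q_i/t_i, p_i ↦ t_i p_i, while r₃₄ fixes t₁, t₂. -/
theorem stmt_15 (t1 t2 θ1 θ2 κ0 κ1 κi q1 q2 p1 p2 : ℂ)
    (ht1 : t1 ≠ 0) (ht2 : t2 ≠ 0)
    (α S : ℂ)
    (hα : α = -(θ1 + θ2 + κ0 + κ1 + κi - 1) / 2)
    (hS : S = q1 * p1 + q2 * p2)
    (hSα : S + α ≠ 0) (hSκ : S + α + κi ≠ 0)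
    (hp1 : p1 ≠ 0) (hp2 : p2 ≠ 0)
    (hq1p1 : q1 * p1 ≠ θ1) (hq2p2 : q2 * p2 ≠ θ2)
    -- Path A: apply σ₃₄ first (t_i ↦ 1/t_i, q_i ↦ q_i/t_i, p_i ↦ t_i p_i,
    -- κ₀ ↔ κ₁), then r₃₄ with the transformed data
    (ασ Sσ : ℂ)
    (hασ : ασ = -(θ1 + θ2 + κ1 + κ0 + κi - 1) / 2)
    (hSσ : Sσ = (q1 / t1) * (t1 * p1) + (q2 / t2) * (t2 * p2))
    (QA1 QA2 PA1 PA2 : ℂ)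
    (hQA1 : QA1 = (1 / t1) * (t1 * p1) * ((q1 / t1) * (t1 * p1) - θ1)
                    / ((Sσ + ασ) * (Sσ + ασ + κi)))
    (hQA2 : QA2 = (1 / t2) * (t2 * p2) * ((q2 / t2) * (t2 * p2) - θ2)
                    / ((Sσ + ασ) * (Sσ + ασ + κi)))
    (hPA1 : PA1 = -((q1 / t1) * (t1 * p1)) / QA1)
    (hPA2 : PA2 = -((q2 / t2) * (t2 * p2)) / QA2)
    -- Path B: apply r₃₄ first, then σ₃₄ with the transformed data
    (QB1 QB2 PB1 PB2 : ℂ)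
    (hQB1 : QB1 = t1 * p1 * (q1 * p1 - θ1) / ((S + α) * (S + α + κi)))
    (hQB2 : QB2 = t2 * p2 * (q2 * p2 - θ2) / ((S + α) * (S + α + κi)))
    (hPB1 : PB1 = -(q1 * p1) / QB1) (hPB2 : PB2 = -(q2 * p2) / QB2) :
    -- the two composites give the same independent variables (t₁,t₂)
    ((1 / t1, 1 / t2) = ((1 / t1 : ℂ), (1 / t2 : ℂ)))
    -- the same parameters (θ₁,θ₂,κ₀,κ₁,κ∞)
    ∧ (((-θ1), (-θ2), (1 - κ1), (1 - κ0), (-κi))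
        = (((-θ1) : ℂ), ((-θ2) : ℂ), ((1 - κ1) : ℂ), ((1 - κ0) : ℂ),
            ((-κi) : ℂ)))
    -- and the same variables (q₁,q₂,p₁,p₂)
    ∧ QA1 = QB1 / t1 ∧ QA2 = QB2 / t2 ∧ PA1 = t1 * PB1 ∧ PA2 = t2 * PB2 := by
  have hSσS : Sσ = S := by rw [hSσ, hS]; field_simp
  have hασα : ασ = α := by rw [hασ, hα]; ring
  have hD : (S + α) * (S + α + κi) ≠ 0 := mul_ne_zero hSα hSκ
  have hA1 : QA1 = QB1 / t1 := by
    rw [hQA1, hQB1, hSσS, hασα]; field_simp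
  have hA2 : QA2 = QB2 / t2 := by
    rw [hQA2, hQB2, hSσS, hασα]; field_simp
  have hQB1ne : QB1 ≠ 0 := by
    rw [hQB1]
    exact div_ne_zero (mul_ne_zero (mul_ne_zero ht1 hp1) (sub_ne_zero.mpr hq1p1)) hD
  have hQB2ne : QB2 ≠ 0 := by
    rw [hQB2]
    exact div_ne_zero (mul_ne_zero (mul_ne_zero ht2 hp2) (sub_ne_zero.mpr hq2p2)) hD
  have hP1 : PA1 = t1 * PB1 := by
    rw [hPA1, hPB1, hA1]; field_simp
  have hP2 : PA2 = t2 * PB2 := by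
    rw [hPA2, hPB2, hA2]; field_simp
  exact ⟨rfl, rfl, hA1, hA2, hP1, hP2⟩
end

section
/- (The transformation σ₂₃ is an involution.) Let t₁, t₂, θ₁, θ₂, κ₀, κ₁, κ∞, q₁, q₂, p₁, p₂ ∈ ℂ with t₁ ≠ 0, t₂ ≠ 0, t₂ ≠ 1, t₁ ≠ t₂. Set g_t = q₁/t₁ + q₂/t₂. Define the transformation σ₂₃ by: θ₂ ↔ κ₀ (other parameters fixed), t₁ ↦ (t₂−t₁)/(t₂−1), t₂ ↦ t₂/(t₂−1), q₁ ↦ ((t₂−t₁)/(t₁(t₂−1)))·q₁, q₂ ↦ (t₂/(1−t₂))·(g_t−1), p₁ ↦ ((t₂−1)/(t₂−t₁))·(t₁p₁−t₂p₂), p₂ ↦ (1−t₂)·p₂. Then the transformed values again satisfy the nondegeneracy conditions needed to apply σ₂₃ (in particular the new t₁, t₂ are nonzero, the new t₂ ≠ 1, and the new t₁ ≠ new t₂), and applying σ₂₃ twice returns the original values of (t₁,t₂), of the parameters (θ₁,θ₂,κ₀,κ₁,κ∞), and of the variables (q₁,q₂,p₁,p₂). -/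
/-!
In the coordinates `uᵢ = qᵢ / tᵢ`, `wᵢ = tᵢ pᵢ` and `r = t₁ / t₂`, the transformation σ₂₃ becomes
`t₂ ↦ t₂ / (t₂ - 1)`, `r ↦ 1 - r`, `(u₁, u₂) ↦ (u₁, 1 - u₁ - u₂)` and `(w₁, w₂) ↦ (w₁ - w₂, -w₂)`,
each of which is visibly an involution.
-/

@[ext]
structure GarnierPoint where
  t1 : ℂ
  t2 : ℂ
  q1 : ℂ
  q2 : ℂ
  p1 : ℂ
  p2 : ℂ

namespace GarnierPoint

variable {x : GarnierPoint}

def Nondegenerate (x : GarnierPoint) : Prop :=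
  x.t1 ≠ 0 ∧ x.t2 ≠ 0 ∧ x.t2 ≠ 1 ∧ x.t1 ≠ x.t2

noncomputable def g (x : GarnierPoint) : ℂ :=
  x.q1 / x.t1 + x.q2 / x.t2

/-- The action of σ₂₃ on times and canonical variables; on the parameters it swaps θ₂ and κ₀. -/
noncomputable def sigma23 (x : GarnierPoint) : GarnierPoint where
  t1 := (x.t2 - x.t1) / (x.t2 - 1)
  t2 := x.t2 / (x.t2 - 1)
  q1 := (x.t2 - x.t1) / (x.t1 * (x.t2 - 1)) * x.q1
  q2 := x.t2 / (1 - x.t2) * (x.g - 1)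
  p1 := (x.t2 - 1) / (x.t2 - x.t1) * (x.t1 * x.p1 - x.t2 * x.p2)
  p2 := (1 - x.t2) * x.p2

theorem Nondegenerate.sigma23 (hx : x.Nondegenerate) : x.sigma23.Nondegenerate := by
  obtain ⟨ht1, ht2, ht2_one, ht12⟩ := hx
  have h21 : x.t2 - 1 ≠ 0 := sub_ne_zero.mpr ht2_one
  have h12 : x.t2 - x.t1 ≠ 0 := sub_ne_zero.mpr ht12.symm
  refine ⟨div_ne_zero h12 h21, div_ne_zero ht2 h21, ?_, ?_⟩
  · rw [GarnierPoint.sigma23, Ne, div_eq_one_iff_eq h21]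
    intro h
    exact one_ne_zero (by linear_combination h)
  · rw [GarnierPoint.sigma23, Ne, div_left_inj' h21, sub_eq_self]
    exact ht1

theorem sigma23_sigma23_t1 (ht2 : x.t2 ≠ 1) : x.sigma23.sigma23.t1 = x.t1 := by
  have h21 : x.t2 - 1 ≠ 0 := sub_ne_zero.mpr ht2
  simp only [sigma23]
  field_simp
  ring

theorem sigma23_sigma23_t2 (ht2 : x.t2 ≠ 1) : x.sigma23.sigma23.t2 = x.t2 := by
  have h21 : x.t2 - 1 ≠ 0 := sub_ne_zero.mpr ht2
  simp only [sigma23]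
  field_simp
  ring

theorem sigma23_q1_div_t1 (ht2 : x.t2 ≠ 1) (ht12 : x.t1 ≠ x.t2) :
    x.sigma23.q1 / x.sigma23.t1 = x.q1 / x.t1 := by
  have h21 : x.t2 - 1 ≠ 0 := sub_ne_zero.mpr ht2
  have h12 : x.t2 - x.t1 ≠ 0 := sub_ne_zero.mpr ht12.symm
  simp only [sigma23]
  field_simp

theorem sigma23_q2_div_t2 (ht2 : x.t2 ≠ 0) (ht2_one : x.t2 ≠ 1) :
    x.sigma23.q2 / x.sigma23.t2 = 1 - x.g := by
  have h21 : x.t2 - 1 ≠ 0 := sub_ne_zero.mpr ht2_one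
  have h12 : 1 - x.t2 ≠ 0 := sub_ne_zero.mpr ht2_one.symm
  simp only [sigma23]
  field_simp
  ring

theorem sigma23_g (ht2 : x.t2 ≠ 0) (ht2_one : x.t2 ≠ 1) (ht12 : x.t1 ≠ x.t2) :
    x.sigma23.g = 1 - x.q2 / x.t2 := by
  rw [g, sigma23_q1_div_t1 ht2_one ht12, sigma23_q2_div_t2 ht2 ht2_one, g]
  ring

theorem sigma23_t1_mul_p1 (ht2 : x.t2 ≠ 1) (ht12 : x.t1 ≠ x.t2) :
    x.sigma23.t1 * x.sigma23.p1 = x.t1 * x.p1 - x.t2 * x.p2 := by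
  have h21 : x.t2 - 1 ≠ 0 := sub_ne_zero.mpr ht2
  have h12 : x.t2 - x.t1 ≠ 0 := sub_ne_zero.mpr ht12.symm
  simp only [sigma23]
  field_simp

theorem sigma23_t2_mul_p2 (ht2 : x.t2 ≠ 1) :
    x.sigma23.t2 * x.sigma23.p2 = -(x.t2 * x.p2) := by
  have h21 : x.t2 - 1 ≠ 0 := sub_ne_zero.mpr ht2
  simp only [sigma23]
  field_simp
  ring

theorem sigma23_sigma23 (hx : x.Nondegenerate) : x.sigma23.sigma23 = x := by
  obtain ⟨-, ht2', ht2_one', ht12'⟩ := hx.sigma23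
  obtain ⟨ht1, ht2, ht2_one, ht12⟩ := hx
  have hq1 : x.sigma23.sigma23.q1 / x.sigma23.sigma23.t1 = x.q1 / x.t1 := by
    rw [sigma23_q1_div_t1 ht2_one' ht12', sigma23_q1_div_t1 ht2_one ht12]
  have hq2 : x.sigma23.sigma23.q2 / x.sigma23.sigma23.t2 = x.q2 / x.t2 := by
    rw [sigma23_q2_div_t2 ht2' ht2_one', sigma23_g ht2 ht2_one ht12, sub_sub_cancel]
  have hp1 : x.sigma23.sigma23.t1 * x.sigma23.sigma23.p1 = x.t1 * x.p1 := by
    rw [sigma23_t1_mul_p1 ht2_one' ht12', sigma23_t1_mul_p1 ht2_one ht12, sigma23_t2_mul_p2 ht2_one]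
    ring
  have hp2 : x.sigma23.sigma23.t2 * x.sigma23.sigma23.p2 = x.t2 * x.p2 := by
    rw [sigma23_t2_mul_p2 ht2_one', sigma23_t2_mul_p2 ht2_one, neg_neg]
  rw [sigma23_sigma23_t1 ht2_one] at hq1 hp1
  rw [sigma23_sigma23_t2 ht2_one] at hq2 hp2
  ext
  · exact sigma23_sigma23_t1 ht2_one
  · exact sigma23_sigma23_t2 ht2_one
  · exact (div_left_inj' ht1).mp hq1
  · exact (div_left_inj' ht2).mp hq2
  · exact mul_left_cancel₀ ht1 hp1
  · exact mul_left_cancel₀ ht2 hp2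

end GarnierPoint

/-- The birational canonical transformation σ₂₃ of the Garnier system in two
variables is an involution: the transformed values again satisfy the
nondegeneracy conditions needed to apply σ₂₃, and applying σ₂₃ twice returns
the original values of (t₁,t₂), of the parameters (θ₁,θ₂,κ₀,κ₁,κ∞) and of the
canonical variables (q₁,q₂,p₁,p₂). Here `κi` denotes κ∞, σ₂₃ swaps θ₂ ↔ κ₀,
and g_t = q₁/t₁ + q₂/t₂. -/
theorem stmt_16 (t1 t2 θ1 θ2 κ0 κ1 κi q1 q2 p1 p2 : ℂ)
    (ht1 : t1 ≠ 0) (ht2 : t2 ≠ 0) (ht2' : t2 ≠ 1) (ht12 : t1 ≠ t2)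
    (gt : ℂ) (hgt : gt = q1 / t1 + q2 / t2)
    -- first application of σ₂₃
    (t1' t2' q1' q2' p1' p2' : ℂ)
    (ht1'd : t1' = (t2 - t1) / (t2 - 1)) (ht2'd : t2' = t2 / (t2 - 1))
    (hq1' : q1' = ((t2 - t1) / (t1 * (t2 - 1))) * q1)
    (hq2' : q2' = (t2 / (1 - t2)) * (gt - 1))
    (hp1' : p1' = ((t2 - 1) / (t2 - t1)) * (t1 * p1 - t2 * p2))
    (hp2' : p2' = (1 - t2) * p2)
    -- second application of σ₂₃
    (gt' : ℂ) (hgt' : gt' = q1' / t1' + q2' / t2')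
    (t1'' t2'' q1'' q2'' p1'' p2'' : ℂ)
    (ht1'' : t1'' = (t2' - t1') / (t2' - 1)) (ht2'' : t2'' = t2' / (t2' - 1))
    (hq1'' : q1'' = ((t2' - t1') / (t1' * (t2' - 1))) * q1')
    (hq2'' : q2'' = (t2' / (1 - t2')) * (gt' - 1))
    (hp1'' : p1'' = ((t2' - 1) / (t2' - t1')) * (t1' * p1' - t2' * p2'))
    (hp2'' : p2'' = (1 - t2') * p2') :
    -- the transformed values satisfy the nondegeneracy conditions
    (t1' ≠ 0 ∧ t2' ≠ 0 ∧ t2' ≠ 1 ∧ t1' ≠ t2')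
    -- the independent variables return to their original values
    ∧ t1'' = t1 ∧ t2'' = t2
    -- the parameters return to their original values (θ₂ ↔ κ₀ applied twice)
    ∧ ((θ1, θ2, κ0, κ1, κi) = ((θ1 : ℂ), (θ2 : ℂ), (κ0 : ℂ), (κ1 : ℂ),
        (κi : ℂ)))
    -- the canonical variables return to their original values
    ∧ q1'' = q1 ∧ q2'' = q2 ∧ p1'' = p1 ∧ p2'' = p2 := by
  subst_vars
  have hx : (⟨t1, t2, q1, q2, p1, p2⟩ : GarnierPoint).Nondegenerate := ⟨ht1, ht2, ht2', ht12⟩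
  have hxx := GarnierPoint.sigma23_sigma23 hx
  exact ⟨hx.sigma23, congrArg GarnierPoint.t1 hxx, congrArg GarnierPoint.t2 hxx, rfl,
    congrArg GarnierPoint.q1 hxx, congrArg GarnierPoint.q2 hxx, congrArg GarnierPoint.p1 hxx,
    congrArg GarnierPoint.p2 hxx⟩
end

section
/- (The transformation σ₄₅ is an involution.) Let t₁, t₂, θ₁, θ₂, κ₀, κ₁, κ∞, q₁, q₂, p₁, p₂ ∈ ℂ with t₁ ≠ 1, t₂ ≠ 1 and q₁+q₂ ≠ 1. Set g₁ = q₁+q₂, α = −(θ₁+θ₂+κ₀+κ₁+κ∞−1)/2 and S = q₁p₁+q₂p₂. Define the transformation σ₄₅ by: κ₁ ↔ κ∞ (other parameters fixed), t_i ↦ t_i/(t_i−1), q_i ↦ q_i/(g₁−1), p_i ↦ (g₁−1)·(p_i−α−S), for i = 1,2. Then the transformed values again satisfy the nondegeneracy conditions (the new t_i ≠ 1 and the new q₁+q₂ ≠ 1), and applying σ₄₅ twice returns the original values of (t₁,t₂), of the parameters (θ₁,θ₂,κ₀,κ₁,κ∞), and of the variables (q₁,q₂,p₁,p₂). -/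
/-- The birational canonical transformation σ₄₅ of the Garnier system in two
variables is an involution: the transformed values again satisfy the
nondegeneracy conditions, and applying σ₄₅ twice returns the original values
of (t₁,t₂), of the parameters (θ₁,θ₂,κ₀,κ₁,κ∞) and of the canonical variables
(q₁,q₂,p₁,p₂). Here `κi` denotes κ∞, σ₄₅ swaps κ₁ ↔ κ∞, g₁ = q₁ + q₂,
α = −(θ₁+θ₂+κ₀+κ₁+κ∞−1)/2 (invariant under κ₁ ↔ κ∞) and S = q₁p₁ + q₂p₂. -/
theorem stmt_17 (t1 t2 θ1 θ2 κ0 κ1 κi q1 q2 p1 p2 : ℂ)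
    (ht1 : t1 ≠ 1) (ht2 : t2 ≠ 1) (hg : q1 + q2 ≠ 1)
    (g1 α S : ℂ)
    (hg1 : g1 = q1 + q2)
    (hα : α = -(θ1 + θ2 + κ0 + κ1 + κi - 1) / 2)
    (hS : S = q1 * p1 + q2 * p2)
    -- first application of σ₄₅
    (t1' t2' q1' q2' p1' p2' : ℂ)
    (ht1'd : t1' = t1 / (t1 - 1)) (ht2'd : t2' = t2 / (t2 - 1))
    (hq1' : q1' = q1 / (g1 - 1)) (hq2' : q2' = q2 / (g1 - 1))
    (hp1' : p1' = (g1 - 1) * (p1 - α - S)) (hp2' : p2' = (g1 - 1) * (p2 - α - S))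
    -- second application of σ₄₅, with the transformed parameters
    -- (θ₁,θ₂,κ₀,κ∞,κ₁) and the transformed variables
    (g1' α' S' : ℂ)
    (hg1'd : g1' = q1' + q2')
    (hα' : α' = -(θ1 + θ2 + κ0 + κi + κ1 - 1) / 2)
    (hS' : S' = q1' * p1' + q2' * p2')
    (t1'' t2'' q1'' q2'' p1'' p2'' : ℂ)
    (ht1'' : t1'' = t1' / (t1' - 1)) (ht2'' : t2'' = t2' / (t2' - 1))
    (hq1'' : q1'' = q1' / (g1' - 1)) (hq2'' : q2'' = q2' / (g1' - 1))
    (hp1'' : p1'' = (g1' - 1) * (p1' - α' - S'))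
    (hp2'' : p2'' = (g1' - 1) * (p2' - α' - S')) :
    -- the transformed values satisfy the nondegeneracy conditions
    (t1' ≠ 1 ∧ t2' ≠ 1 ∧ q1' + q2' ≠ 1)
    -- the independent variables return to their original values
    ∧ t1'' = t1 ∧ t2'' = t2
    -- the parameters return to their original values (κ₁ ↔ κ∞ applied twice)
    ∧ ((θ1, θ2, κ0, κ1, κi) = ((θ1 : ℂ), (θ2 : ℂ), (κ0 : ℂ), (κ1 : ℂ),
        (κi : ℂ)))
    -- the canonical variables return to their original values
    ∧ q1'' = q1 ∧ q2'' = q2 ∧ p1'' = p1 ∧ p2'' = p2 := by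
  have ht1m : t1 - 1 ≠ 0 := sub_ne_zero.mpr ht1
  have ht2m : t2 - 1 ≠ 0 := sub_ne_zero.mpr ht2
  have hgm : g1 - 1 ≠ 0 := by rw [hg1]; exact sub_ne_zero.mpr hg
  have hαα : α' = α := by rw [hα, hα']; ring
  have e1 : q1' * p1' = q1 * (p1 - α - S) := by
    rw [hq1', hp1']; field_simp
  have e2 : q2' * p2' = q2 * (p2 - α - S) := by
    rw [hq2', hp2']; field_simp
  have hS'v : S' = S - g1 * (α + S) := by
    rw [hS', e1, e2, hg1, hS]; ring
  have ht1n : t1' ≠ 1 := by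
    rw [ht1'd]; intro h
    rw [div_eq_one_iff_eq ht1m] at h
    exact one_ne_zero (show (1:ℂ) = 0 by linear_combination h)
  have ht2n : t2' ≠ 1 := by
    rw [ht2'd]; intro h
    rw [div_eq_one_iff_eq ht2m] at h
    exact one_ne_zero (show (1:ℂ) = 0 by linear_combination h)
  have hqsum : q1' + q2' = g1 / (g1 - 1) := by
    rw [hq1', hq2', hg1]; field_simp
  have hgn : q1' + q2' ≠ 1 := by
    rw [hqsum]; intro h
    rw [div_eq_one_iff_eq hgm] at h
    exact one_ne_zero (show (1:ℂ) = 0 by linear_combination h)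
  have hg1'v : g1' - 1 = 1 / (g1 - 1) := by
    rw [hg1'd, hqsum]; field_simp; ring
  refine ⟨⟨ht1n, ht2n, hgn⟩, ?_, ?_, rfl, ?_, ?_, ?_, ?_⟩
  · rw [ht1'', ht1'd]; field_simp; ring
  · rw [ht2'', ht2'd]; field_simp; ring
  · rw [hq1'', hg1'v, hq1']; field_simp
  · rw [hq2'', hg1'v, hq2']; field_simp
  · rw [hp1'', hg1'v, hp1', hαα, hS'v]; field_simp; ring
  · rw [hp2'', hg1'v, hp2', hαα, hS'v]; field_simp; ring
end
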